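/- Let Q, M ∈ ℝ^{(n+m)×(n+m)} with M invertible, β > 0, Σ := Q·M⁻¹ symmetric positive semidefinite, and G := Qᵀ + Q − β·MᵀΣM positive semidefinite. Let w^k ∈ ℝⁿ⁺ᵐ, suppose w̃ = (x̃, λ̃) ∈ Ω satisfies the prediction VI at w^k with matrix Q, and set w^{k+1} = w^k − β·M(w^k − w̃). Then for every w = (x, λ) ∈ Ω: f(x) − f(x̃) + (w − w̃)ᵀΓ(w) + (1/(2β))·‖w − w^k‖²_Σ ≥ (1/(2β))·‖w − w^{k+1}‖²_Σ. -/

import Mathlib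

open Matrix

/-- The continuous linear functional `u ↦ v ⬝ᵥ u` on `ℝⁿ`, used to express
that `v` is the gradient of a scalar function. -/
noncomputable def dotCLM {n : ℕ} (v : Fin n → ℝ) : (Fin n → ℝ) →L[ℝ] ℝ :=
  LinearMap.toContinuousLinearMap (∑ j, v j • LinearMap.proj j)

/-- The `x`-part of `w = (x, λ) ∈ ℝⁿ⁺ᵐ`. -/
def xpart {n m : ℕ} (w : Fin n ⊕ Fin m → ℝ) : Fin n → ℝ := fun i => w (Sum.inl i)

/-- The `λ`-part of `w = (x, λ) ∈ ℝⁿ⁺ᵐ`. -/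
def lpart {n m : ℕ} (w : Fin n ⊕ Fin m → ℝ) : Fin m → ℝ := fun j => w (Sum.inr j)

/-- `Ω = X × ℝ₊ᵐ` viewed inside `ℝⁿ⁺ᵐ`. -/
def OmegaSet {n m : ℕ} (X : Set (Fin n → ℝ)) : Set (Fin n ⊕ Fin m → ℝ) :=
  {w | xpart w ∈ X ∧ ∀ j, 0 ≤ lpart w j}

/-- `Γ(w) = (DΦ(x)ᵀλ, −Φ(x))` for `w = (x, λ)`, where row `i` of the Jacobian `DΦ`
is the gradient `φ' i`. -/
noncomputable def Gam {n m : ℕ} (φ : Fin m → (Fin n → ℝ) → ℝ)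
    (φ' : Fin m → (Fin n → ℝ) → (Fin n → ℝ)) (w : Fin n ⊕ Fin m → ℝ) :
    Fin n ⊕ Fin m → ℝ :=
  Sum.elim (∑ i, lpart w i • φ' i (xpart w)) (fun i => -(φ i (xpart w)))

lemma dotCLM_apply {n : ℕ} (v u : Fin n → ℝ) : dotCLM v u = v ⬝ᵥ u := by
  simp [dotCLM, dotProduct, LinearMap.sum_apply]

lemma grad_ineq {n : ℕ} {φ : (Fin n → ℝ) → ℝ} {g : Fin n → ℝ} {x : Fin n → ℝ}
    (hφ : ConvexOn ℝ Set.univ φ) (hφ' : HasFDerivAt φ (dotCLM g) x)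
    (y : Fin n → ℝ) : g ⬝ᵥ (y - x) ≤ φ y - φ x := by
  set L : ℝ →ᵃ[ℝ] (Fin n → ℝ) := AffineMap.lineMap x y with hL
  have hconv : ConvexOn ℝ Set.univ (φ ∘ L) := by
    have := hφ.comp_affineMap L
    simpa using this
  have hL0 : L 0 = x := by simp [hL]
  have hL1 : L 1 = y := by simp [hL]
  have hLd : HasDerivAt (⇑L) (y - x) 0 := by
    have : HasDerivAt (fun t : ℝ => x + t • (y - x)) ((1:ℝ) • (y - x)) 0 := by
      simpa using (((hasDerivAt_id (0:ℝ)).smul_const (y - x)).const_add x)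
    have he : ⇑L = fun t : ℝ => x + t • (y - x) := by
      funext t; simp [hL, AffineMap.lineMap_apply, vsub_eq_sub, vadd_eq_add, add_comm]
    rw [he]; simpa using this
  have hφ'0 : HasFDerivAt φ (dotCLM g) (L 0) := by rw [hL0]; exact hφ'
  have hd : HasDerivAt (φ ∘ ⇑L) (dotCLM g (y - x)) 0 := hφ'0.comp_hasDerivAt 0 hLd
  have := hconv.le_slope_of_hasDerivAt (Set.mem_univ 0) (Set.mem_univ 1) one_pos hd
  rw [dotCLM_apply] at this
  simpa [slope, hL0, hL1] using this

lemma dot_decomp {n m : ℕ} (u v : Fin n ⊕ Fin m → ℝ) :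
    u ⬝ᵥ v = xpart u ⬝ᵥ xpart v + lpart u ⬝ᵥ lpart v := by
  simp [dotProduct, Fintype.sum_sum_type, xpart, lpart]

lemma dot_sum {k : ℕ} {ι : Type*} [Fintype ι] (v : Fin k → ℝ) (w : ι → Fin k → ℝ) :
    v ⬝ᵥ (∑ i, w i) = ∑ i, v ⬝ᵥ w i := by
  simp only [dotProduct, Finset.sum_apply, Finset.mul_sum]
  exact Finset.sum_comm

lemma dot_transpose {k : ℕ} (A : Matrix (Fin k) (Fin k) ℝ) (u v : Fin k → ℝ) :
    u ⬝ᵥ Aᵀ *ᵥ v = v ⬝ᵥ A *ᵥ u := by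
  rw [Matrix.mulVec_transpose, dotProduct_comm, ← Matrix.dotProduct_mulVec]

lemma dot_transpose' {n m : ℕ} (A : Matrix (Fin n ⊕ Fin m) (Fin n ⊕ Fin m) ℝ)
    (u v : Fin n ⊕ Fin m → ℝ) : u ⬝ᵥ Aᵀ *ᵥ v = v ⬝ᵥ A *ᵥ u := by
  rw [Matrix.mulVec_transpose, dotProduct_comm, ← Matrix.dotProduct_mulVec]

lemma gam_dot {n m : ℕ} (φ : Fin m → (Fin n → ℝ) → ℝ)
    (φ' : Fin m → (Fin n → ℝ) → (Fin n → ℝ)) (v w' : Fin n ⊕ Fin m → ℝ) :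
    v ⬝ᵥ Gam φ φ' w'
      = ∑ i, (lpart w' i * (xpart v ⬝ᵥ φ' i (xpart w')) + lpart v i * (-(φ i (xpart w')))) := by
  rw [dot_decomp, Finset.sum_add_distrib]
  congr 1
  · have hx : xpart (Gam φ φ' w') = ∑ i, lpart w' i • φ' i (xpart w') := rfl
    rw [hx, dot_sum]
    refine Finset.sum_congr rfl fun i _ => ?_
    rw [dotProduct_smul]
    simp [smul_eq_mul]

/-- Inequality (81): form of the key inequality with `Γ` evaluated at `w` for the
prediction-correction method. -/
theorem stmt19 {n m : ℕ}
    (hn : 0 < n) (hm : 0 < m)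
    (X : Set (Fin n → ℝ)) (hXne : X.Nonempty) (hXcl : IsClosed X) (hXcvx : Convex ℝ X)
    (f : (Fin n → ℝ) → ℝ) (hf : ConvexOn ℝ Set.univ f)
    (φ : Fin m → (Fin n → ℝ) → ℝ) (hφ : ∀ i, ConvexOn ℝ Set.univ (φ i))
    (φ' : Fin m → (Fin n → ℝ) → (Fin n → ℝ))
    (hφ' : ∀ i x, HasFDerivAt (φ i) (dotCLM (φ' i x)) x)
    (hφ'c : ∀ i, Continuous (φ' i))
    (Q M : Matrix (Fin n ⊕ Fin m) (Fin n ⊕ Fin m) ℝ) (hM : IsUnit M)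
    (β : ℝ) (hβ : 0 < β)
    (hSig : (Q * M⁻¹).PosSemidef)
    (hG : (Qᵀ + Q - β • (Mᵀ * (Q * M⁻¹) * M)).PosSemidef)
    (wk wt : Fin n ⊕ Fin m → ℝ)
    (hwt : wt ∈ OmegaSet (m := m) X)
    (hpred : ∀ w ∈ OmegaSet (m := m) X,
      f (xpart w) - f (xpart wt) + (w - wt) ⬝ᵥ Gam φ φ' wt
        ≥ (w - wt) ⬝ᵥ Q.mulVec (wk - wt))
    (wk1 : Fin n ⊕ Fin m → ℝ) (hwk1 : wk1 = wk - β • M.mulVec (wk - wt)) :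
    ∀ w ∈ OmegaSet (m := m) X,
      f (xpart w) - f (xpart wt) + (w - wt) ⬝ᵥ Gam φ φ' w
        + (1 / (2 * β)) * ((w - wk) ⬝ᵥ (Q * M⁻¹).mulVec (w - wk))
      ≥ (1 / (2 * β)) * ((w - wk1) ⬝ᵥ (Q * M⁻¹).mulVec (w - wk1)) := by
  intro w hw
  set S : Matrix (Fin n ⊕ Fin m) (Fin n ⊕ Fin m) ℝ := Q * M⁻¹ with hSdef
  have hdet : IsUnit M.det := (Matrix.isUnit_iff_isUnit_det M).mp hM
  have hQM : S * M = Q := by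
    rw [hSdef, Matrix.mul_assoc, Matrix.nonsing_inv_mul M hdet, Matrix.mul_one]
  have hSsym : Sᵀ = S := by
    have := hSig.1
    simpa [Matrix.IsHermitian, Matrix.conjTranspose_eq_transpose_of_trivial] using this
  have hsym : ∀ u v : Fin n ⊕ Fin m → ℝ, u ⬝ᵥ S *ᵥ v = v ⬝ᵥ S *ᵥ u := by
    intro u v
    rw [← hSsym, dot_transpose', hSsym]
  -- monotonicity of Γ
  have hmono : (w - wt) ⬝ᵥ Gam φ φ' wt ≤ (w - wt) ⬝ᵥ Gam φ φ' w := by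
    rw [gam_dot, gam_dot]
    apply Finset.sum_le_sum
    intro i _
    have hxw : xpart (w - wt) = xpart w - xpart wt := rfl
    have hlw : lpart (w - wt) = fun j => lpart w j - lpart wt j := rfl
    have g1 := grad_ineq (hφ i) (hφ' i (xpart w)) (xpart wt)
    have g2 := grad_ineq (hφ i) (hφ' i (xpart wt)) (xpart w)
    rw [← neg_sub (xpart w) (xpart wt), dotProduct_neg] at g1
    have hl1 : 0 ≤ lpart w i := hw.2 i
    have hl2 : 0 ≤ lpart wt i := hwt.2 i
    have c1 : xpart (w - wt) ⬝ᵥ φ' i (xpart w) = φ' i (xpart w) ⬝ᵥ (xpart w - xpart wt) := by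
      rw [hxw, dotProduct_comm]
    have c2 : xpart (w - wt) ⬝ᵥ φ' i (xpart wt) = φ' i (xpart wt) ⬝ᵥ (xpart w - xpart wt) := by
      rw [hxw, dotProduct_comm]
    rw [c1, c2, hlw]
    simp only []
    beta_reduce
    have m1 : lpart w i * (φ i (xpart w) - φ i (xpart wt))
        ≤ lpart w i * (φ' i (xpart w) ⬝ᵥ (xpart w - xpart wt)) :=
      mul_le_mul_of_nonneg_left (by linarith) hl1
    have m2 : lpart wt i * (φ' i (xpart wt) ⬝ᵥ (xpart w - xpart wt))
        ≤ lpart wt i * (φ i (xpart w) - φ i (xpart wt)) :=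
      mul_le_mul_of_nonneg_left g2 hl2
    nlinarith [m1, m2]
  have hp := hpred w hw
  set d : Fin n ⊕ Fin m → ℝ := wk - wt with hd
  set a : Fin n ⊕ Fin m → ℝ := w - wk with ha
  have hwwt : w - wt = a + d := by rw [ha, hd]; abel
  have hwk1' : w - wk1 = a + β • M *ᵥ d := by rw [hwk1, ha, hd]; abel
  have hMdS : S *ᵥ (M *ᵥ d) = Q *ᵥ d := by
    rw [Matrix.mulVec_mulVec, hQM]
  have hexp : (w - wk1) ⬝ᵥ S *ᵥ (w - wk1)
      = a ⬝ᵥ S *ᵥ a + 2 * β * (a ⬝ᵥ Q *ᵥ d)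
        + β ^ 2 * ((M *ᵥ d) ⬝ᵥ S *ᵥ (M *ᵥ d)) := by
    rw [hwk1']
    rw [Matrix.mulVec_add, Matrix.mulVec_smul, add_dotProduct, dotProduct_add,
      dotProduct_add, dotProduct_smul, smul_dotProduct, smul_dotProduct,
      dotProduct_smul, hMdS]
    rw [hsym (M *ᵥ d) a]
    rw [show a ⬝ᵥ S *ᵥ (M *ᵥ d) = a ⬝ᵥ Q *ᵥ d by rw [hMdS]]
    simp only [smul_eq_mul]
    ring
  have hGd : β * ((M *ᵥ d) ⬝ᵥ S *ᵥ (M *ᵥ d)) ≤ 2 * (d ⬝ᵥ Q *ᵥ d) := by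
    have h0 := hG.dotProduct_mulVec_nonneg d
    rw [Matrix.sub_mulVec, Matrix.add_mulVec, Matrix.smul_mulVec,
      dotProduct_sub, dotProduct_add, dotProduct_smul] at h0
    simp only [star_trivial, smul_eq_mul] at h0
    have h1 : d ⬝ᵥ Qᵀ *ᵥ d = d ⬝ᵥ Q *ᵥ d := dot_transpose' Q d d
    have h2 : d ⬝ᵥ (Mᵀ * S * M) *ᵥ d = (M *ᵥ d) ⬝ᵥ S *ᵥ (M *ᵥ d) := by
      rw [show Mᵀ * S * M = Mᵀ * (S * M) by rw [Matrix.mul_assoc],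
        ← Matrix.mulVec_mulVec, dot_transpose', ← Matrix.mulVec_mulVec,
        dotProduct_comm]
    rw [h1, h2] at h0
    linarith
  have hTQ : (w - wt) ⬝ᵥ Q *ᵥ d = a ⬝ᵥ Q *ᵥ d + d ⬝ᵥ Q *ᵥ d := by
    rw [hwwt, add_dotProduct]
  have key : f (xpart w) - f (xpart wt) + (w - wt) ⬝ᵥ Gam φ φ' w
      ≥ a ⬝ᵥ Q *ᵥ d + (β / 2) * ((M *ᵥ d) ⬝ᵥ S *ᵥ (M *ᵥ d)) := by
    rw [hTQ] at hp
    nlinarith [hp, hmono, hGd]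
  rw [ge_iff_le, hexp]
  have hβ' : (2 : ℝ) * β ≠ 0 := by positivity
  have hfin : 1 / (2 * β) * (a ⬝ᵥ S *ᵥ a + 2 * β * (a ⬝ᵥ Q *ᵥ d)
      + β ^ 2 * ((M *ᵥ d) ⬝ᵥ S *ᵥ (M *ᵥ d)))
      = 1 / (2 * β) * (a ⬝ᵥ S *ᵥ a) + (a ⬝ᵥ Q *ᵥ d
        + (β / 2) * ((M *ᵥ d) ⬝ᵥ S *ᵥ (M *ᵥ d))) := by
    field_simp
    ring
  rw [hfin]
  linarith [key]
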